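/- If q is a primitive m-th root of unity in K, then the elements Z11^m, Z12^m, Z21^m and Z22^m are central in Mat₂(q). -/

import Mathlib

noncomputable section

open FreeAlgebra MulOpposite

/-- The relations of the Dipper–Donkin quantized matrix algebra of rank 2:
`Z12·Z11 = Z11·Z12`, `Z21·Z11 = q·Z11·Z21`, `Z22·Z21 = Z21·Z22`, `Z22·Z12 = q·Z12·Z22`,
`Z21·Z12 = q·Z12·Z21`, `Z22·Z11 = Z11·Z22 + (q−1)·Z12·Z21`, where the generators
`Z11, Z12, Z21, Z22` are the images of `0, 1, 2, 3 : Fin 4`. -/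
inductive DDrel {K : Type*} [Field K] (q : K) :
    FreeAlgebra K (Fin 4) → FreeAlgebra K (Fin 4) → Prop
  | r1 : DDrel q (ι K (1 : Fin 4) * ι K (0 : Fin 4)) (ι K (0 : Fin 4) * ι K (1 : Fin 4))
  | r2 : DDrel q (ι K (2 : Fin 4) * ι K (0 : Fin 4)) (q • (ι K (0 : Fin 4) * ι K (2 : Fin 4)))
  | r3 : DDrel q (ι K (3 : Fin 4) * ι K (2 : Fin 4)) (ι K (2 : Fin 4) * ι K (3 : Fin 4))
  | r4 : DDrel q (ι K (3 : Fin 4) * ι K (1 : Fin 4)) (q • (ι K (1 : Fin 4) * ι K (3 : Fin 4)))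
  | r5 : DDrel q (ι K (2 : Fin 4) * ι K (1 : Fin 4)) (q • (ι K (1 : Fin 4) * ι K (2 : Fin 4)))
  | r6 : DDrel q (ι K (3 : Fin 4) * ι K (0 : Fin 4))
      (ι K (0 : Fin 4) * ι K (3 : Fin 4) + (q - 1) • (ι K (1 : Fin 4) * ι K (2 : Fin 4)))

/-- The Dipper–Donkin quantized matrix algebra `Mat₂(q)`: the quotient of the free
`K`-algebra on four generators by the two-sided ideal generated by the relations above. -/
abbrev DDMat2 {K : Type*} [Field K] (q : K) := RingQuot (DDrel q)

variable {K : Type*} [Field K]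

/-- The generator `Z11` of `Mat₂(q)`. -/
def Z11 (q : K) : DDMat2 q := RingQuot.mkAlgHom K (DDrel q) (ι K (0 : Fin 4))
/-- The generator `Z12` of `Mat₂(q)`. -/
def Z12 (q : K) : DDMat2 q := RingQuot.mkAlgHom K (DDrel q) (ι K (1 : Fin 4))
/-- The generator `Z21` of `Mat₂(q)`. -/
def Z21 (q : K) : DDMat2 q := RingQuot.mkAlgHom K (DDrel q) (ι K (2 : Fin 4))
/-- The generator `Z22` of `Mat₂(q)`. -/
def Z22 (q : K) : DDMat2 q := RingQuot.mkAlgHom K (DDrel q) (ι K (3 : Fin 4))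


/-! Every pair of generators other than `(Z22, Z11)` commutes up to a factor `q` (or `1`), so
raising one of them to the `m`-th power produces the factor `q ^ m = 1`. For the remaining pair,
`Z12 Z21` `q`-commutes with both `Z11` and `Z22`, and induction gives
`Z22 Z11 ^ (n + 1) = Z11 ^ (n + 1) Z22 + (q ^ (n + 1) - 1) Z11 ^ n Z12 Z21` (and the mirror
formula for powers of `Z22`), whose error term vanishes at `n + 1 = m`. As the four generators
generate `Mat₂(q)` as a `K`-algebra, commuting with them is enough. -/

section QCommute

variable {A : Type*} [Ring A] [Algebra K A] {q : K}

theorem mul_pow_eq_smul_of_mul_eq_smul {x y : A} (h : y * x = q • (x * y)) (n : ℕ) :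
    y * x ^ n = q ^ n • (x ^ n * y) := by
  induction n with
  | zero => simp
  | succ n ih =>
    rw [pow_succ, ← mul_assoc, ih, smul_mul_assoc, mul_assoc, h, mul_smul_comm, smul_smul,
      ← mul_assoc, ← pow_succ, ← pow_succ]

theorem pow_mul_eq_smul_of_mul_eq_smul {x y : A} (h : y * x = q • (x * y)) (n : ℕ) :
    y ^ n * x = q ^ n • (x * y ^ n) := by
  have hop : op x * op y = q • (op y * op x) := by
    rw [← op_mul, h, op_smul, op_mul]
  simpa [← op_pow, ← op_mul, ← op_smul] using mul_pow_eq_smul_of_mul_eq_smul hop n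

theorem commute_pow_left_of_mul_eq_smul {x y : A} (h : y * x = q • (x * y)) {n : ℕ}
    (hq : q ^ n = 1) : Commute (y ^ n) x := by
  rw [commute_iff_eq, pow_mul_eq_smul_of_mul_eq_smul h, hq, one_smul]

theorem commute_pow_right_of_mul_eq_smul {x y : A} (h : y * x = q • (x * y)) {n : ℕ}
    (hq : q ^ n = 1) : Commute (x ^ n) y := by
  rw [commute_iff_eq, mul_pow_eq_smul_of_mul_eq_smul h, hq, one_smul]

theorem mul_pow_succ_of_mul_eq_add_smul {a d e : A} (hda : d * a = a * d + (q - 1) • e)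
    (hea : e * a = q • (a * e)) (n : ℕ) :
    d * a ^ (n + 1) = a ^ (n + 1) * d + (q ^ (n + 1) - 1) • (a ^ n * e) := by
  induction n with
  | zero => simpa using hda
  | succ n ih =>
    calc d * a ^ (n + 2) = (d * a ^ (n + 1)) * a := by rw [pow_succ _ (n + 1), mul_assoc]
      _ = a ^ (n + 1) * (d * a) + (q ^ (n + 1) - 1) • (a ^ n * (e * a)) := by
        rw [ih, add_mul, smul_mul_assoc, mul_assoc, mul_assoc]
      _ = a ^ (n + 2) * d + (q ^ (n + 2) - 1) • (a ^ (n + 1) * e) := by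
        rw [hda, hea, mul_add, mul_smul_comm, mul_smul_comm, smul_smul, ← mul_assoc,
          ← mul_assoc, ← pow_succ, ← pow_succ, add_assoc, ← add_smul]
        congr 2
        ring

theorem commute_pow_right_of_mul_eq_add_smul {a d e : A} (hda : d * a = a * d + (q - 1) • e)
    (hea : e * a = q • (a * e)) {n : ℕ} (hq : q ^ n = 1) : Commute (a ^ n) d := by
  obtain _ | n := n
  · simp
  rw [commute_iff_eq, mul_pow_succ_of_mul_eq_add_smul hda hea, hq, sub_self, zero_smul,
    add_zero]

theorem commute_pow_left_of_mul_eq_add_smul {a d e : A} (hda : d * a = a * d + (q - 1) • e)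
    (hde : d * e = q • (e * d)) {n : ℕ} (hq : q ^ n = 1) : Commute (d ^ n) a := by
  -- in `Aᵐᵒᵖ` the roles of `a` and `d` are exchanged
  have hda_op : op a * op d = op d * op a + (q - 1) • op e := by
    rw [← op_mul, hda, op_add, op_mul, op_smul]
  have hed_op : op e * op d = q • (op d * op e) := by
    rw [← op_mul, hde, op_smul, op_mul]
  simpa [← op_pow] using (commute_pow_right_of_mul_eq_add_smul hda_op hed_op hq).unop

end QCommute

namespace DDMat2

variable (q : K)

theorem commute_Z12_Z11 : Commute (Z12 q) (Z11 q) := by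
  simpa only [commute_iff_eq, Z11, Z12, map_mul] using RingQuot.mkAlgHom_rel K (DDrel.r1 (q := q))

theorem Z21_mul_Z11 : Z21 q * Z11 q = q • (Z11 q * Z21 q) := by
  simpa only [Z11, Z21, map_mul, map_smul] using RingQuot.mkAlgHom_rel K (DDrel.r2 (q := q))

theorem commute_Z22_Z21 : Commute (Z22 q) (Z21 q) := by
  simpa only [commute_iff_eq, Z21, Z22, map_mul] using RingQuot.mkAlgHom_rel K (DDrel.r3 (q := q))

theorem Z22_mul_Z12 : Z22 q * Z12 q = q • (Z12 q * Z22 q) := by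
  simpa only [Z12, Z22, map_mul, map_smul] using RingQuot.mkAlgHom_rel K (DDrel.r4 (q := q))

theorem Z21_mul_Z12 : Z21 q * Z12 q = q • (Z12 q * Z21 q) := by
  simpa only [Z12, Z21, map_mul, map_smul] using RingQuot.mkAlgHom_rel K (DDrel.r5 (q := q))

theorem Z22_mul_Z11 : Z22 q * Z11 q = Z11 q * Z22 q + (q - 1) • (Z12 q * Z21 q) := by
  simpa only [Z11, Z12, Z21, Z22, map_mul, map_smul, map_add] using
    RingQuot.mkAlgHom_rel K (DDrel.r6 (q := q))

theorem Z12_mul_Z21_mul_Z11 : Z12 q * Z21 q * Z11 q = q • (Z11 q * (Z12 q * Z21 q)) := by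
  rw [mul_assoc, Z21_mul_Z11, mul_smul_comm, ← mul_assoc, commute_Z12_Z11, mul_assoc]

theorem Z22_mul_Z12_mul_Z21 : Z22 q * (Z12 q * Z21 q) = q • (Z12 q * Z21 q * Z22 q) := by
  rw [← mul_assoc, Z22_mul_Z12, smul_mul_assoc, mul_assoc, commute_Z22_Z21, mul_assoc]

theorem adjoin_generators : Algebra.adjoin K {Z11 q, Z12 q, Z21 q, Z22 q} = ⊤ := by
  have hgen : {Z11 q, Z12 q, Z21 q, Z22 q} = RingQuot.mkAlgHom K (DDrel q) '' Set.range (ι K) := by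
    rw [← Set.range_comp]
    ext x
    simp [Fin.exists_fin_succ, Z11, Z12, Z21, Z22, eq_comm]
  rw [hgen, Algebra.adjoin_image, FreeAlgebra.adjoin_range_ι, Algebra.map_top,
    AlgHom.range_eq_top]
  exact RingQuot.mkAlgHom_surjective K (DDrel q)

theorem commute_of_commute_generators {z : DDMat2 q} (h11 : Commute z (Z11 q))
    (h12 : Commute z (Z12 q)) (h21 : Commute z (Z21 q)) (h22 : Commute z (Z22 q))
    (x : DDMat2 q) : Commute z x := by
  refine Algebra.commute_of_mem_adjoin_of_forall_mem_commute
    (adjoin_generators q ▸ Algebra.mem_top) ?_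
  rintro y (rfl | rfl | rfl | rfl)
  exacts [h11, h12, h21, h22]

end DDMat2

open DDMat2

theorem DDMat2_pow_central_general (q : K) (m : ℕ)
    (hq1 : q ^ m = 1) :
    (∀ x : DDMat2 q, Z11 q ^ m * x = x * Z11 q ^ m) ∧
    (∀ x : DDMat2 q, Z12 q ^ m * x = x * Z12 q ^ m) ∧
    (∀ x : DDMat2 q, Z21 q ^ m * x = x * Z21 q ^ m) ∧
    (∀ x : DDMat2 q, Z22 q ^ m * x = x * Z22 q ^ m) := by
  have h11 := commute_of_commute_generators q (Commute.pow_self _ m)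
    ((commute_Z12_Z11 q).symm.pow_left m) (commute_pow_right_of_mul_eq_smul (Z21_mul_Z11 q) hq1)
    (commute_pow_right_of_mul_eq_add_smul (Z22_mul_Z11 q) (Z12_mul_Z21_mul_Z11 q) hq1)
  have h12 := commute_of_commute_generators q ((commute_Z12_Z11 q).pow_left m)
    (Commute.pow_self _ m) (commute_pow_right_of_mul_eq_smul (Z21_mul_Z12 q) hq1)
    (commute_pow_right_of_mul_eq_smul (Z22_mul_Z12 q) hq1)
  have h21 := commute_of_commute_generators q (commute_pow_left_of_mul_eq_smul (Z21_mul_Z11 q) hq1)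
    (commute_pow_left_of_mul_eq_smul (Z21_mul_Z12 q) hq1) (Commute.pow_self _ m)
    ((commute_Z22_Z21 q).symm.pow_left m)
  have h22 := commute_of_commute_generators q
    (commute_pow_left_of_mul_eq_add_smul (Z22_mul_Z11 q) (Z22_mul_Z12_mul_Z21 q) hq1)
    (commute_pow_left_of_mul_eq_smul (Z22_mul_Z12 q) hq1) ((commute_Z22_Z21 q).pow_left m)
    (Commute.pow_self _ m)
  exact ⟨fun x => (h11 x).eq, fun x => (h12 x).eq, fun x => (h21 x).eq, fun x => (h22 x).eq⟩

/-- If `q` is a primitive `m`-th root of unity in `K`, then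
`Z11^m`, `Z12^m`, `Z21^m` and `Z22^m` are central elements of `Mat₂(q)`. -/
theorem DDMat2_pow_central (q : K) (hq : q ≠ 0) (m : ℕ)
    (hq1 : q ^ m = 1) (hq2 : ∀ k : ℕ, 1 ≤ k → k < m → q ^ k ≠ 1) :
    (∀ x : DDMat2 q, Z11 q ^ m * x = x * Z11 q ^ m) ∧
    (∀ x : DDMat2 q, Z12 q ^ m * x = x * Z12 q ^ m) ∧
    (∀ x : DDMat2 q, Z21 q ^ m * x = x * Z21 q ^ m) ∧
    (∀ x : DDMat2 q, Z22 q ^ m * x = x * Z22 q ^ m) :=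
  DDMat2_pow_central_general q m hq1
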